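/- arXiv:1303.3668 — 2 statements merged into one kernel-verified Lean document; each statement's English description precedes it below -/
import Mathlib

section
/- For an optimal-access (k+r, k, l) code with constant repairing subspaces over F (normalized so that its last row of encoding matrices is the identity), every nonzero vector v ∈ F^l belongs to at most log_r l of the repairing subspaces: if J = {j ∈ Fin k : v ∈ S j}, then r^{|J|} ≤ l. -/
open Module

/-- Sum of finranks of an independent family restricted to a finset is at most
the finrank of their sup. -/
lemma aux_sum_finrank_le {F V : Type*} [Field F] [AddCommGroup V] [Module F V]
    [FiniteDimensional F V] {ι : Type*} {W : ι → Submodule F V}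
    (hW : iSupIndep W) (s : Finset ι) :
    ∑ i ∈ s, finrank F (W i) ≤ finrank F ↥(⨆ i ∈ s, W i) := by
  classical
  induction s using Finset.induction with
  | empty => simp
  | @insert a s ha ih =>
    rw [Finset.sum_insert ha]
    have hdisj : Disjoint (W a) (⨆ i ∈ s, W i) := by
      refine (hW a).mono_right ?_
      refine iSup₂_le fun i hi => ?_
      have hne : i ≠ a := fun h => ha (h ▸ hi)
      exact le_iSup₂_of_le i hne le_rfl
    have := Submodule.finrank_sup_add_finrank_inf_eq (W a) (⨆ i ∈ s, W i)
    rw [hdisj.eq_bot, finrank_bot, add_zero] at this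
    calc finrank F (W a) + ∑ i ∈ s, finrank F (W i)
        ≤ finrank F (W a) + finrank F ↥(⨆ i ∈ s, W i) := by omega
      _ = finrank F ↥(W a ⊔ ⨆ i ∈ s, W i) := this.symm
      _ = finrank F ↥(⨆ i ∈ insert a s, W i) := by
          rw [Finset.iSup_insert]

/-- For an optimal-access (k+r, k, l) code with constant repairing subspaces (normalized so
that the last row of encoding matrices is the identity), every nonzero vector `v ∈ F^l`
belongs to at most `log_r l` of the repairing subspaces: if `J = {j : v ∈ S j}` then
`r ^ |J| ≤ l`. -/
theorem stmt_7 (F : Type*) [Field F] (r l k : ℕ) (hr : 2 ≤ r) (hl : 0 < l) (hk : 0 < k)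
    (hrl : r ∣ l)
    (C : Fin r → Fin k → Matrix (Fin l) (Fin l) F)
    (hCinv : ∀ i m, IsUnit (C i m))
    (hClast : ∀ (i : Fin r) (m : Fin k), (i : ℕ) = r - 1 → C i m = 1)
    (S : Fin k → Submodule F (Fin l → F))
    (hdim : ∀ m, Module.finrank F ↥(S m) = l / r)
    (hindep : ∀ m, iSupIndep fun i : Fin r => (S m).map (C i m).vecMulLinear)
    (hsup : ∀ m, (⨆ i : Fin r, (S m).map (C i m).vecMulLinear) = ⊤)
    (halign : ∀ m m' : Fin k, m ≠ m' → ∀ i : Fin r,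
      (S m).map (C i m').vecMulLinear = S m)
    (B : Fin k → Finset (Fin l)) (hBcard : ∀ m, (B m).card = l / r)
    (haccess : ∀ m, S m =
      Submodule.span F ((fun j => Pi.single j (1 : F)) '' ((B m : Set (Fin l)))))
    (v : Fin l → F) (hv : v ≠ 0)
    (J : Finset (Fin k)) (hJ : ∀ j, j ∈ J ↔ v ∈ S j) :
    r ^ J.card ≤ l := by
  classical
  -- finrank of maps under the invertible matrices is preserved
  have hrank_map : ∀ (i : Fin r) (m : Fin k) (p : Submodule F (Fin l → F)),
      finrank F ↥(p.map (C i m).vecMulLinear) = finrank F ↥p := by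
    intro i m p
    obtain ⟨u, hu⟩ := hCinv i m
    have h1 := u.mul_inv
    have h2 := u.inv_mul
    let e : (Fin l → F) ≃ₗ[F] (Fin l → F) :=
      LinearEquiv.ofLinear (C i m).vecMulLinear ((↑u⁻¹ : Matrix (Fin l) (Fin l) F)).vecMulLinear
        (by
          apply LinearMap.ext; intro x
          show Matrix.vecMul (Matrix.vecMul x (↑u⁻¹ : Matrix (Fin l) (Fin l) F)) (C i m) = x
          rw [← hu, Matrix.vecMul_vecMul, h2, Matrix.vecMul_one])
        (by
          apply LinearMap.ext; intro x
          show Matrix.vecMul (Matrix.vecMul x (C i m)) (↑u⁻¹ : Matrix (Fin l) (Fin l) F) = x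
          rw [← hu, Matrix.vecMul_vecMul, h1, Matrix.vecMul_one])
    have : p.map (C i m).vecMulLinear = p.map (e : (Fin l → F) →ₗ[F] (Fin l → F)) := rfl
    rw [this, LinearEquiv.finrank_map_eq]
  -- key induction
  have key : ∀ J' : Finset (Fin k),
      r ^ J'.card * finrank F ↥(⨅ j ∈ J', S j) ≤ l := by
    intro J'
    induction J' using Finset.induction with
    | empty =>
      have h0 : finrank F ↥(⨅ j ∈ (∅ : Finset (Fin k)), S j) = l := by
        rw [show (⨅ j ∈ (∅ : Finset (Fin k)), S j) = ⊤ by simp]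
        rw [finrank_top, Module.finrank_pi, Fintype.card_fin]
      rw [Finset.card_empty, pow_zero, one_mul, h0]
    | @insert m J' hm ih =>
      set T : Submodule F (Fin l → F) := ⨅ j ∈ J', S j with hT
      have hins : (⨅ j ∈ insert m J', S j) = S m ⊓ T := by
        rw [Finset.iInf_insert]
      -- the maps of `S m ⊓ T`
      set W : Fin r → Submodule F (Fin l → F) :=
        fun i => (S m ⊓ T).map (C i m).vecMulLinear with hW
      have hWle : ∀ i, W i ≤ (S m).map (C i m).vecMulLinear :=
        fun i => Submodule.map_mono inf_le_left
      have hWT : ∀ i, W i ≤ T := by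
        intro i x hx
        obtain ⟨y, hy, rfl⟩ := hx
        have hyT : y ∈ T := (Submodule.mem_inf.mp hy).2
        rw [hT] at hyT ⊢
        simp only [Submodule.mem_iInf] at hyT ⊢
        intro j hj
        have hne : j ≠ m := fun h => hm (h ▸ hj)
        rw [← halign j m hne i]
        exact ⟨y, hyT j hj, rfl⟩
      have hWind : iSupIndep W := (hindep m).mono hWle
      -- sum up
      have hsum : r * finrank F ↥(S m ⊓ T) ≤ finrank F ↥T := by
        have h1 : ∑ i ∈ Finset.univ, finrank F ↥(W i) ≤ finrank F ↥(⨆ i ∈ Finset.univ, W i) :=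
          aux_sum_finrank_le hWind Finset.univ
        have h2 : (⨆ i ∈ Finset.univ, W i) ≤ T := by
          refine iSup₂_le fun i _ => hWT i
        have h3 : ∑ i ∈ Finset.univ, finrank F ↥(W i) = r * finrank F ↥(S m ⊓ T) := by
          rw [Finset.sum_congr rfl (fun i _ => hrank_map i m (S m ⊓ T))]
          simp [Finset.sum_const, mul_comm]
        calc r * finrank F ↥(S m ⊓ T) = ∑ i ∈ Finset.univ, finrank F ↥(W i) := h3.symm
          _ ≤ finrank F ↥(⨆ i ∈ Finset.univ, W i) := h1
          _ ≤ finrank F ↥T := Submodule.finrank_mono h2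
      rw [hins, Finset.card_insert_of_notMem hm, pow_succ]
      calc r ^ J'.card * r * finrank F ↥(S m ⊓ T)
          = r ^ J'.card * (r * finrank F ↥(S m ⊓ T)) := by ring
        _ ≤ r ^ J'.card * finrank F ↥T := Nat.mul_le_mul_left _ hsum
        _ ≤ l := ih
  -- v is a nonzero element of the intersection
  have hvT : v ∈ ⨅ j ∈ J, S j := by
    simp only [Submodule.mem_iInf]
    exact fun j hj => (hJ j).mp hj
  have hpos : 0 < finrank F ↥(⨅ j ∈ J, S j) := by
    rw [Module.finrank_pos_iff_exists_ne_zero]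
    exact ⟨⟨v, hvT⟩, fun h => hv (congrArg Subtype.val h)⟩
  calc r ^ J.card = r ^ J.card * 1 := (mul_one _).symm
    _ ≤ r ^ J.card * finrank F ↥(⨅ j ∈ J, S j) := Nat.mul_le_mul_left _ hpos
    _ ≤ l := key J
end

section
/- Suppose l = r^t for a natural number t. Then for any optimal-access (k+r, k, l) code with constant repairing subspaces over F (normalized so that its last row of encoding matrices is the identity), the number of systematic nodes satisfies k ≤ r·t, i.e. k ≤ r·log_r l. -/
open Module

/-- Sum of finranks of an independent family over a finset equals finrank of its sup. -/
lemma aux_sum_finrank {F V : Type*} [Field F] [AddCommGroup V] [Module F V]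
    [FiniteDimensional F V] {ι : Type*} [DecidableEq ι] (U : ι → Submodule F V)
    (h : iSupIndep U) (A : Finset ι) :
    ∑ i ∈ A, Module.finrank F ↥(U i) = Module.finrank F ↥(A.sup U) := by
  classical
  induction A using Finset.induction_on with
  | empty => simp; change 0 = finrank F ↥(⊥ : Submodule F V); simp
  | @insert a A ha ih =>
    have hdisj : Disjoint (U a) (A.sup U) := by
      refine (h a).mono_right ?_
      refine Finset.sup_le fun i hi => ?_
      exact le_iSup₂ (f := fun i (_ : i ≠ a) => U i) i (fun he => ha (he ▸ hi))
    rw [Finset.sum_insert ha, Finset.sup_insert, ih]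
    have h2 := Submodule.finrank_sup_add_finrank_inf_eq (U a) (A.sup U)
    rw [hdisj.eq_bot] at h2
    simp only [finrank_bot, add_zero] at h2
    omega

/-- If `l = r^t`, then for any optimal-access (k+r, k, l) code with constant repairing
subspaces (normalized so that the last row of encoding matrices is the identity), the
number of systematic nodes satisfies `k ≤ r * t = r * log_r l`. -/
theorem stmt_8 (F : Type*) [Field F] (r l k t : ℕ) (hr : 2 ≤ r) (hl : 0 < l) (hk : 0 < k)
    (hrl : r ∣ l) (hlt : l = r ^ t)
    (C : Fin r → Fin k → Matrix (Fin l) (Fin l) F)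
    (hCinv : ∀ i m, IsUnit (C i m))
    (hClast : ∀ (i : Fin r) (m : Fin k), (i : ℕ) = r - 1 → C i m = 1)
    (S : Fin k → Submodule F (Fin l → F))
    (hdim : ∀ m, Module.finrank F ↥(S m) = l / r)
    (hindep : ∀ m, iSupIndep fun i : Fin r => (S m).map (C i m).vecMulLinear)
    (hsup : ∀ m, (⨆ i : Fin r, (S m).map (C i m).vecMulLinear) = ⊤)
    (halign : ∀ m m' : Fin k, m ≠ m' → ∀ i : Fin r,
      (S m).map (C i m').vecMulLinear = S m)
    (B : Fin k → Finset (Fin l)) (hBcard : ∀ m, (B m).card = l / r)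
    (haccess : ∀ m, S m =
      Submodule.span F ((fun j => Pi.single j (1 : F)) '' ((B m : Set (Fin l)))))  :
    k ≤ r * t := by
  classical
  -- injectivity and surjectivity of the maps
  have hinj : ∀ (i : Fin r) (m : Fin k), Function.Injective ((C i m).vecMulLinear) := by
    intro i m
    rw [Matrix.coe_vecMulLinear]
    exact Matrix.vecMul_injective_iff_isUnit.mpr (hCinv i m)
  have hsurj : ∀ (i : Fin r) (m : Fin k), Function.Surjective ((C i m).vecMulLinear) := by
    intro i m
    rw [Matrix.coe_vecMulLinear]
    exact Matrix.vecMul_surjective_iff_isUnit.mpr (hCinv i m)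
  -- the linear equivalence induced by C i m
  let E : ∀ (i : Fin r) (m : Fin k), (Fin l → F) ≃ₗ[F] (Fin l → F) := fun i m =>
    LinearEquiv.ofBijective (C i m).vecMulLinear ⟨hinj i m, hsurj i m⟩
  have hEcoe : ∀ (i : Fin r) (m : Fin k),
      ((E i m : (Fin l → F) →ₗ[F] (Fin l → F))) = (C i m).vecMulLinear := fun _ _ => rfl
  -- Lemma A : if W is invariant under all C i m then r * dim (W ⊓ S m) ≤ dim W
  have lemA : ∀ (m : Fin k) (W : Submodule F (Fin l → F)),
      (∀ i : Fin r, W.map (C i m).vecMulLinear = W) →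
      r * Module.finrank F ↥(W ⊓ S m) ≤ Module.finrank F ↥W := by
    intro m W hW
    set U : Fin r → Submodule F (Fin l → F) :=
      fun i => (W ⊓ S m).map (C i m).vecMulLinear with hU
    have hUle : ∀ i, U i ≤ W := fun i => by
      calc U i ≤ W.map (C i m).vecMulLinear := Submodule.map_mono inf_le_left
      _ = W := hW i
    have hUindep : iSupIndep U :=
      (hindep m).mono fun i => Submodule.map_mono inf_le_right
    have hUrank : ∀ i, Module.finrank F ↥(U i) = Module.finrank F ↥(W ⊓ S m) := by
      intro i
      exact LinearEquiv.finrank_map_eq (E i m) (W ⊓ S m)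
    have h1 : ∑ i : Fin r, Module.finrank F ↥(U i)
        = Module.finrank F ↥(Finset.univ.sup U) := aux_sum_finrank U hUindep Finset.univ
    have h2 : Finset.univ.sup U ≤ W := Finset.sup_le fun i _ => hUle i
    calc r * Module.finrank F ↥(W ⊓ S m)
        = ∑ _i : Fin r, Module.finrank F ↥(W ⊓ S m) := by
          rw [Finset.sum_const, Finset.card_univ, Fintype.card_fin, smul_eq_mul]
      _ = ∑ i : Fin r, Module.finrank F ↥(U i) := by
          exact (Finset.sum_congr rfl fun i _ => (hUrank i).symm)
      _ = Module.finrank F ↥(Finset.univ.sup U) := h1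
      _ ≤ Module.finrank F ↥W := Submodule.finrank_mono h2
  -- invariance of finset infs
  have hWinv : ∀ (A : Finset (Fin k)) (i : Fin r) (m : Fin k), m ∉ A →
      (A.inf S).map (C i m).vecMulLinear = A.inf S := by
    intro A
    induction A using Finset.induction_on with
    | empty =>
      intro i m _
      rw [Finset.inf_empty, Submodule.map_top, LinearMap.range_eq_top.mpr (hsurj i m)]
    | @insert a A ha ih =>
      intro i m hm
      rw [Finset.inf_insert]
      rw [Submodule.map_inf _ (hinj i m),
        halign a m (fun he => (by simp [he] at hm)) i,
        ih i m (fun he => hm (Finset.mem_insert_of_mem he))]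
  -- iterated bound : r ^ |A| * dim (inf_{m ∈ A} S m) ≤ l
  have hiter : ∀ A : Finset (Fin k),
      r ^ A.card * Module.finrank F ↥(A.inf S) ≤ l := by
    intro A
    induction A using Finset.induction_on with
    | empty =>
      simp only [Finset.card_empty, pow_zero, one_mul, Finset.inf_empty]
      change finrank F ↥(⊤ : Submodule F (Fin l → F)) ≤ l
      rw [finrank_top, Module.finrank_pi, Fintype.card_fin]
    | @insert a A ha ih =>
      rw [Finset.card_insert_of_notMem ha, Finset.inf_insert]
      have hinvA : ∀ i : Fin r, (A.inf S).map (C i a).vecMulLinear = A.inf S :=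
        fun i => hWinv A i a ha
      have := lemA a (A.inf S) hinvA
      rw [inf_comm] at this
      calc r ^ (A.card + 1) * Module.finrank F ↥(S a ⊓ A.inf S)
          = r ^ A.card * (r * Module.finrank F ↥(S a ⊓ A.inf S)) := by ring
        _ ≤ r ^ A.card * Module.finrank F ↥(A.inf S) :=
            Nat.mul_le_mul_left _ this
        _ ≤ l := ih
  -- each coordinate lies in at most t of the B m
  have hdeg : ∀ j : Fin l, (Finset.univ.filter (fun m => j ∈ B m)).card ≤ t := by
    intro j
    set A := Finset.univ.filter (fun m => j ∈ B m) with hA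
    have hmem : Pi.single j (1 : F) ∈ A.inf S := by
      rw [Submodule.mem_finsetInf]
      intro m hm
      rw [haccess m]
      exact Submodule.subset_span ⟨j, by simpa [hA] using hm, rfl⟩
    have hne : (Pi.single j (1 : F) : Fin l → F) ≠ 0 := by
      intro h0
      have := congrFun h0 j
      simp at this
    have hpos : 0 < Module.finrank F ↥(A.inf S) :=
      Module.finrank_pos_iff_exists_ne_zero.mpr
        ⟨⟨_, hmem⟩, fun h0 => hne (congrArg Subtype.val h0)⟩
    have h1 : r ^ A.card ≤ l := by
      calc r ^ A.card = r ^ A.card * 1 := (mul_one _).symm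
        _ ≤ r ^ A.card * Module.finrank F ↥(A.inf S) := Nat.mul_le_mul_left _ hpos
        _ ≤ l := hiter A
    rw [hlt] at h1
    exact (Nat.pow_le_pow_iff_right (lt_of_lt_of_le one_lt_two hr)).mp h1
  -- double counting
  have hcount : ∑ m : Fin k, (B m).card = ∑ j : Fin l,
      (Finset.univ.filter (fun m => j ∈ B m)).card := by
    simp only [Finset.card_filter]
    rw [Finset.sum_comm]
    refine Finset.sum_congr rfl fun m _ => ?_
    rw [← Finset.card_filter]
    congr 1
    ext j
    simp
  have hle : k * (l / r) ≤ l * t := by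
    calc k * (l / r) = ∑ _m : Fin k, (l / r) := by
          rw [Finset.sum_const, Finset.card_univ, Fintype.card_fin, smul_eq_mul]
      _ = ∑ m : Fin k, (B m).card := by
          exact (Finset.sum_congr rfl fun m _ => (hBcard m).symm)
      _ = ∑ j : Fin l, (Finset.univ.filter (fun m => j ∈ B m)).card := hcount
      _ ≤ ∑ _j : Fin l, t := Finset.sum_le_sum fun j _ => hdeg j
      _ = l * t := by rw [Finset.sum_const, Finset.card_univ, Fintype.card_fin, smul_eq_mul]
  have hlr : l = r * (l / r) := (Nat.mul_div_cancel' hrl).symm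
  have hlrpos : 0 < l / r := Nat.div_pos (Nat.le_of_dvd hl hrl) (by omega)
  have : k * (l / r) ≤ (r * t) * (l / r) := by
    calc k * (l / r) ≤ l * t := hle
      _ = (r * (l / r)) * t := by rw [← hlr]
      _ = (r * t) * (l / r) := by ring
  exact Nat.le_of_mul_le_mul_right this hlrpos
end
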